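/- Suppose G : Z → X is measurable and injective with measurable inverse on its range. Then for probability measures μ on X and λ on Z, every coupling π of μ and G_*λ arises as (id×G)_*ρ for some coupling ρ of μ and λ; consequently W_c(μ, G_*λ) = inf over couplings ρ of μ and λ of ∫ c(x, G(z)) dρ(x,z). -/

import Mathlib

/-!
A coupling `π` of `μ` and `G_*λ` gives full mass to `{(x, y) | y ∈ range G}`, which is the range
of the measurable embedding `id × G`; hence `π` is the pushforward of its own pullback
`ρ = (id × G)^* π`, and `ρ` couples `μ` with `λ` because `G_*` is injective on measures.
So pushing forward along `id × G` maps the couplings of `(μ, λ)` onto those of `(μ, G_*λ)`, and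
the two infima agree by the change of variables `∫ c d(id × G)_*ρ = ∫ c ∘ (id × G) dρ`.
-/

open MeasureTheory

/-- The Wasserstein cost: infimum of the transport cost over all couplings. -/
noncomputable def Wc {A B : Type*} [MeasurableSpace A] [MeasurableSpace B]
    (c : A × B → ENNReal) (μ : Measure A) (ν : Measure B) : ENNReal :=
  ⨅ π ∈ {π : Measure (A × B) | IsProbabilityMeasure π ∧
      π.map Prod.fst = μ ∧ π.map Prod.snd = ν},
    ∫⁻ p, c p ∂π

open Set

section Couplings

variable {A B B' : Type*} [MeasurableSpace A] [MeasurableSpace B] [MeasurableSpace B']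

def couplings (μ : Measure A) (ν : Measure B) : Set (Measure (A × B)) :=
  {π | IsProbabilityMeasure π ∧ π.map Prod.fst = μ ∧ π.map Prod.snd = ν}

lemma Wc_eq_iInf_couplings (c : A × B → ENNReal) (μ : Measure A) (ν : Measure B) :
    Wc c μ ν = ⨅ π ∈ couplings μ ν, ∫⁻ p, c p ∂π :=
  rfl

lemma map_fst_map_prodMap_id {f : B → B'} (hf : Measurable f) (ρ : Measure (A × B)) :
    (ρ.map (Prod.map id f)).map Prod.fst = ρ.map Prod.fst := by
  rw [Measure.map_map measurable_fst (measurable_id.prodMap hf)]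
  rfl

lemma map_snd_map_prodMap_id {f : B → B'} (hf : Measurable f) (ρ : Measure (A × B)) :
    (ρ.map (Prod.map id f)).map Prod.snd = (ρ.map Prod.snd).map f := by
  rw [Measure.map_map measurable_snd (measurable_id.prodMap hf),
    Measure.map_map hf measurable_snd]
  rfl

lemma map_prodMap_id_mem_couplings {f : B → B'} (hf : Measurable f) {μ : Measure A}
    {ν : Measure B} {ρ : Measure (A × B)} (hρ : ρ ∈ couplings μ ν) :
    ρ.map (Prod.map id f) ∈ couplings μ (ν.map f) := by
  obtain ⟨hρ_prob, hρ_fst, hρ_snd⟩ := hρ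
  exact ⟨Measure.isProbabilityMeasure_map (measurable_id.prodMap hf).aemeasurable,
    by rw [map_fst_map_prodMap_id hf, hρ_fst], by rw [map_snd_map_prodMap_id hf, hρ_snd]⟩

lemma ae_mem_range_prodMap_id_of_map_snd_eq {f : B → B'} (hf : MeasurableEmbedding f)
    {ν : Measure B} {π : Measure (A × B')} (hπ : π.map Prod.snd = ν.map f) :
    ∀ᵐ p ∂π, p ∈ range (Prod.map id f) := by
  have h_snd : ∀ᵐ p ∂π, p.2 ∈ range f := by
    refine ae_of_ae_map measurable_snd.aemeasurable ?_
    rw [hπ]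
    exact ae_map_mem_range f hf.measurableSet_range ν
  filter_upwards [h_snd] with p ⟨z, hz⟩
  exact ⟨(p.1, z), by simp [hz]⟩

lemma exists_mem_couplings_map_prodMap_id_eq {f : B → B'} (hf : MeasurableEmbedding f)
    {μ : Measure A} {ν : Measure B} {π : Measure (A × B')} (hπ : π ∈ couplings μ (ν.map f)) :
    ∃ ρ ∈ couplings μ ν, ρ.map (Prod.map id f) = π := by
  obtain ⟨hπ_prob, hπ_fst, hπ_snd⟩ := hπ
  have hF : MeasurableEmbedding (Prod.map (id : A → A) f) := MeasurableEmbedding.id.prodMap hf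
  have h_range := ae_mem_range_prodMap_id_of_map_snd_eq hf hπ_snd
  have h_map : (π.comap (Prod.map id f)).map (Prod.map id f) = π := by
    rw [hF.map_comap, Measure.restrict_eq_self_of_ae_mem h_range]
  refine ⟨π.comap (Prod.map id f), ⟨hF.isProbabilityMeasure_comap h_range, ?_, ?_⟩, h_map⟩
  · rw [← map_fst_map_prodMap_id hf.measurable, h_map, hπ_fst]
  · have h_snd_map := map_snd_map_prodMap_id hf.measurable (π.comap (Prod.map id f))
    rw [h_map, hπ_snd] at h_snd_map
    rw [← hf.comap_map ν, h_snd_map, hf.comap_map]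

theorem couplings_map_right {f : B → B'} (hf : MeasurableEmbedding f) (μ : Measure A)
    (ν : Measure B) :
    couplings μ (ν.map f) = Measure.map (Prod.map id f) '' couplings μ ν := by
  ext π
  constructor
  · exact exists_mem_couplings_map_prodMap_id_eq hf
  · rintro ⟨ρ, hρ, rfl⟩
    exact map_prodMap_id_mem_couplings hf.measurable hρ

theorem Wc_map_right {f : B → B'} (hf : MeasurableEmbedding f) (c : A × B' → ENNReal)
    (μ : Measure A) (ν : Measure B) :
    Wc c μ (ν.map f) = ⨅ ρ ∈ couplings μ ν, ∫⁻ p, c (p.1, f p.2) ∂ρ := by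
  rw [Wc_eq_iInf_couplings, couplings_map_right hf, iInf_image]
  simp_rw [(MeasurableEmbedding.id.prodMap hf).lintegral_map]
  rfl

end Couplings

theorem wasserstein_eq_encoder_inf_general {X Z : Type*} [MeasurableSpace X] [MeasurableSpace Z]
    (G : Z → X) (hG : MeasurableEmbedding G)
    (μ : Measure X) (lam : Measure Z)
    (c : X × X → ENNReal) :
    (∀ π : Measure (X × X), IsProbabilityMeasure π →
        π.map Prod.fst = μ → π.map Prod.snd = lam.map G →
        ∃ ρ : Measure (X × Z), IsProbabilityMeasure ρ ∧
          ρ.map Prod.fst = μ ∧ ρ.map Prod.snd = lam ∧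
          π = ρ.map (fun p => (p.1, G p.2))) ∧
    Wc c μ (lam.map G) =
      ⨅ ρ ∈ {ρ : Measure (X × Z) | IsProbabilityMeasure ρ ∧
          ρ.map Prod.fst = μ ∧ ρ.map Prod.snd = lam},
        ∫⁻ p, c (p.1, G p.2) ∂ρ := by
  refine ⟨fun π hπ_prob hπ_fst hπ_snd => ?_, Wc_map_right hG c μ lam⟩
  obtain ⟨ρ, ⟨hρ_prob, hρ_fst, hρ_snd⟩, rfl⟩ :=
    exists_mem_couplings_map_prodMap_id_eq hG ⟨hπ_prob, hπ_fst, hπ_snd⟩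
  exact ⟨ρ, hρ_prob, hρ_fst, hρ_snd, rfl⟩

/-- For an injective decoder `G` with measurable inverse on its range
(a measurable embedding), every coupling of `μ` and `G_*λ` arises as the
pushforward of a coupling of `μ` and `λ` under `(x,z) ↦ (x, G z)`; consequently
`W_c(μ, G_*λ)` equals the infimum of `∫ c (x, G z) dρ` over couplings `ρ` of `μ, λ`. -/
theorem wasserstein_eq_encoder_inf {X Z : Type*} [MeasurableSpace X] [MeasurableSpace Z]
    (G : Z → X) (hG : MeasurableEmbedding G)
    (μ : Measure X) (lam : Measure Z) [IsProbabilityMeasure μ] [IsProbabilityMeasure lam]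
    (c : X × X → ENNReal) (hc : Measurable c) :
    (∀ π : Measure (X × X), IsProbabilityMeasure π →
        π.map Prod.fst = μ → π.map Prod.snd = lam.map G →
        ∃ ρ : Measure (X × Z), IsProbabilityMeasure ρ ∧
          ρ.map Prod.fst = μ ∧ ρ.map Prod.snd = lam ∧
          π = ρ.map (fun p => (p.1, G p.2))) ∧
    Wc c μ (lam.map G) =
      ⨅ ρ ∈ {ρ : Measure (X × Z) | IsProbabilityMeasure ρ ∧
          ρ.map Prod.fst = μ ∧ ρ.map Prod.snd = lam},
        ∫⁻ p, c (p.1, G p.2) ∂ρ :=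
  wasserstein_eq_encoder_inf_general G hG μ lam c
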